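/- Let α > 2 and c_w > 0, N ∈ ℕ, and let W' = (w'_{j'k'})_{-N≤j',k'≤N} satisfy |w'_{j'k'}| ≤ c_w/(⟨j'⟩⟨k'⟩(N+1)²⟨j'-k'⟩^{α-1}). Let Û ∈ U(2N+1). Then every entry S_{jk} of Û* W' Û satisfies |S_{jk}| ≤ c_w c₂ / (N+1)², where c₂ = c_ν|_{ν=2} is the constant from the convolution lemma. -/

import Mathlib

/-- ⟨k⟩ = |k| + 1 -/
noncomputable def br (k : ℤ) : ℝ := |(k : ℝ)| + 1

/-!
Each entry of `Uᴴ * W * U` pairs `W` with two unit columns of `U`, so two applications of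
Cauchy–Schwarz bound it by the Hilbert–Schmidt norm of `W`. Squaring the entrywise bound on `W'`
and summing over `k'` with the convolution estimate, then over `j'` (using `⟨j'⟩⁻⁴ ≤ ⟨j'⟩⁻²`),
bounds that norm by `c_w c₂ / (N + 1)²`.
-/

open Finset

namespace Matrix

variable {ι κ 𝕜 : Type*} [Fintype ι]

lemma norm_mul_apply_le_sqrt {m R : Type*} [NonUnitalSeminormedRing R]
    (A : Matrix m ι R) (B : Matrix ι κ R) (i : m) (k : κ) :
    ‖(A * B) i k‖ ≤ √(∑ l, ‖A i l‖ ^ 2) * √(∑ l, ‖B l k‖ ^ 2) :=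
  calc ‖(A * B) i k‖ ≤ ∑ l, ‖A i l‖ * ‖B l k‖ :=
        (norm_sum_le _ _).trans (sum_le_sum fun _ _ => norm_mul_le _ _)
    _ ≤ _ := Real.sum_mul_le_sqrt_mul_sqrt _ _ _

variable [RCLike 𝕜] [DecidableEq ι]

lemma sum_norm_sq_apply_eq_one {U : Matrix ι ι 𝕜} (hU : U ∈ unitaryGroup ι 𝕜) (j : ι) :
    ∑ i, ‖U i j‖ ^ 2 = 1 := by
  have h : (star U * U) j j = 1 := by rw [Unitary.star_mul_self_of_mem hU, one_apply_eq]
  simp only [mul_apply, star_apply, RCLike.star_def, RCLike.conj_mul] at h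
  exact_mod_cast h

lemma norm_conjTranspose_mul_mul_apply_le {U : Matrix ι ι 𝕜} (hU : U ∈ unitaryGroup ι 𝕜)
    (W : Matrix ι ι 𝕜) (j k : ι) :
    ‖(Uᴴ * W * U) j k‖ ≤ √(∑ i, ∑ l, ‖W i l‖ ^ 2) := by
  have hcol := sum_norm_sq_apply_eq_one hU
  have hrow (i : ι) : ‖(W * U) i k‖ ^ 2 ≤ ∑ l, ‖W i l‖ ^ 2 := by
    have h := norm_mul_apply_le_sqrt W U i k
    rw [hcol, Real.sqrt_one, mul_one] at h
    exact (Real.le_sqrt (norm_nonneg _) (by positivity)).1 h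
  rw [Matrix.mul_assoc]
  calc ‖(Uᴴ * (W * U)) j k‖ ≤ √(∑ i, ‖Uᴴ j i‖ ^ 2) * √(∑ i, ‖(W * U) i k‖ ^ 2) :=
        norm_mul_apply_le_sqrt _ _ j k
    _ = √(∑ i, ‖(W * U) i k‖ ^ 2) := by
        simp only [conjTranspose_apply, norm_star, hcol, Real.sqrt_one, one_mul]
    _ ≤ _ := Real.sqrt_le_sqrt (sum_le_sum fun i _ => hrow i)

end Matrix

lemma sum_sum_norm_sq_le_of_le_mul {ι κ E : Type*} [Fintype ι] [Fintype κ]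
    [SeminormedAddCommGroup E] (W : ι → κ → E) (p : ι → ℝ) (K : ι → κ → ℝ) {C c : ℝ}
    (hW : ∀ i l, ‖W i l‖ ≤ C * (p i * K i l)) (hK : ∀ i, ∑ l, K i l ^ 2 ≤ c * p i ^ 2)
    (hp : ∀ i, |p i| ≤ 1) (hpc : ∑ i, p i ^ 2 ≤ c) :
    ∑ i, ∑ l, ‖W i l‖ ^ 2 ≤ (C * c) ^ 2 := by
  have hc : 0 ≤ c := (sum_nonneg fun i _ => sq_nonneg (p i)).trans hpc
  calc ∑ i, ∑ l, ‖W i l‖ ^ 2 ≤ ∑ i, C ^ 2 * p i ^ 2 * ∑ l, K i l ^ 2 := by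
        simp only [mul_sum]
        gcongr with i _ l _
        calc ‖W i l‖ ^ 2 ≤ (C * (p i * K i l)) ^ 2 := pow_le_pow_left₀ (norm_nonneg _) (hW i l) 2
          _ = _ := by ring
    _ ≤ ∑ i, C ^ 2 * p i ^ 2 * (c * p i ^ 2) := by gcongr with i; exact hK i
    _ ≤ ∑ i, C ^ 2 * c * p i ^ 2 := sum_le_sum fun i _ =>
        calc C ^ 2 * p i ^ 2 * (c * p i ^ 2) = C ^ 2 * c * p i ^ 2 * p i ^ 2 := by ring
          _ ≤ C ^ 2 * c * p i ^ 2 :=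
            mul_le_of_le_one_right (by positivity) ((sq_le_one_iff_abs_le_one _).2 (hp i))
    _ ≤ (C * c) ^ 2 := by
        rw [← mul_sum, mul_pow, sq c, ← mul_assoc]
        gcongr

lemma one_le_br (k : ℤ) : 1 ≤ br k := le_add_of_nonneg_left (abs_nonneg _)

lemma br_pos (k : ℤ) : 0 < br k := one_pos.trans_le (one_le_br k)

lemma br_rpow_sq (k : ℤ) (a : ℝ) : (br k ^ (a - 1)) ^ 2 = br k ^ (2 * a - 2) := by
  rw [← Real.rpow_mul_natCast (br_pos k).le]
  ring_nf

theorem conjugated_block_bound_general (α cw c₂ : ℝ) (hcw : 0 < cw) (N : ℕ)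
    (W' : Matrix (Finset.Icc (-(N : ℤ)) (N : ℤ)) (Finset.Icc (-(N : ℤ)) (N : ℤ)) ℂ)
    (hW' : ∀ j' k' : Finset.Icc (-(N : ℤ)) (N : ℤ),
      ‖W' j' k'‖ ≤ cw /
        (br j'.val * br k'.val * ((N : ℝ) + 1) ^ 2 * br (j'.val - k'.val) ^ (α - 1)))
    (hc₂a : ∀ j' : ℤ, ∑ k' : Finset.Icc (-(N : ℤ)) (N : ℤ),
        1 / (br k'.val ^ 2 * br (j' - k'.val) ^ (2 * α - 2)) ≤ c₂ / br j' ^ 2)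
    (hc₂b : ∑ j' : Finset.Icc (-(N : ℤ)) (N : ℤ), 1 / br j'.val ^ 2 ≤ c₂)
    (Uh : Matrix (Finset.Icc (-(N : ℤ)) (N : ℤ)) (Finset.Icc (-(N : ℤ)) (N : ℤ)) ℂ)
    (hUh : Uh ∈ Matrix.unitaryGroup (Finset.Icc (-(N : ℤ)) (N : ℤ)) ℂ) :
    ∀ j k : Finset.Icc (-(N : ℤ)) (N : ℤ),
      ‖(Uh.conjTranspose * W' * Uh) j k‖ ≤ cw * c₂ / ((N : ℝ) + 1) ^ 2 := by
  intro j k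
  have hc₂ : 0 ≤ c₂ := (sum_nonneg fun i _ => by positivity).trans hc₂b
  have hW'_factor (i l : Finset.Icc (-(N : ℤ)) (N : ℤ)) : ‖W' i l‖ ≤
      cw / ((N : ℝ) + 1) ^ 2 * ((br i)⁻¹ * (br l * br (i - l) ^ (α - 1))⁻¹) :=
    (hW' i l).trans_eq (by simp only [div_eq_mul_inv, mul_inv]; ring)
  have hK (i : Finset.Icc (-(N : ℤ)) (N : ℤ)) :
      ∑ l : Finset.Icc (-(N : ℤ)) (N : ℤ), ((br l * br (i - l) ^ (α - 1))⁻¹) ^ 2 ≤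
        c₂ * (br i)⁻¹ ^ 2 := by
    simpa only [mul_inv, mul_pow, inv_pow, br_rpow_sq, one_div, div_eq_mul_inv, one_mul]
      using hc₂a i
  have hp (i : Finset.Icc (-(N : ℤ)) (N : ℤ)) : |(br i)⁻¹| ≤ 1 := by
    rw [abs_inv, abs_of_pos (br_pos i)]
    exact inv_le_one_of_one_le₀ (one_le_br i)
  have hHS : ∑ i, ∑ l, ‖W' i l‖ ^ 2 ≤ (cw / ((N : ℝ) + 1) ^ 2 * c₂) ^ 2 :=
    sum_sum_norm_sq_le_of_le_mul W' _ _ hW'_factor hK hp (by simpa only [inv_pow, one_div] using hc₂b)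
  calc _ ≤ √(∑ i, ∑ l, ‖W' i l‖ ^ 2) := Matrix.norm_conjTranspose_mul_mul_apply_le hUh W' j k
    _ ≤ cw / ((N : ℝ) + 1) ^ 2 * c₂ :=
        (Real.sqrt_le_sqrt hHS).trans_eq (Real.sqrt_sq (by positivity))
    _ = cw * c₂ / ((N : ℝ) + 1) ^ 2 := by ring

theorem conjugated_block_bound (α cw c₂ : ℝ) (hα : 2 < α) (hcw : 0 < cw) (N : ℕ)
    (W' : Matrix (Finset.Icc (-(N : ℤ)) (N : ℤ)) (Finset.Icc (-(N : ℤ)) (N : ℤ)) ℂ)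
    (hW' : ∀ j' k' : Finset.Icc (-(N : ℤ)) (N : ℤ),
      ‖W' j' k'‖ ≤ cw /
        (br j'.val * br k'.val * ((N : ℝ) + 1) ^ 2 * br (j'.val - k'.val) ^ (α - 1)))
    (hc₂a : ∀ j' : ℤ, ∑ k' : Finset.Icc (-(N : ℤ)) (N : ℤ),
        1 / (br k'.val ^ 2 * br (j' - k'.val) ^ (2 * α - 2)) ≤ c₂ / br j' ^ 2)
    (hc₂b : ∑ j' : Finset.Icc (-(N : ℤ)) (N : ℤ), 1 / br j'.val ^ 2 ≤ c₂)
    (Uh : Matrix (Finset.Icc (-(N : ℤ)) (N : ℤ)) (Finset.Icc (-(N : ℤ)) (N : ℤ)) ℂ)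
    (hUh : Uh ∈ Matrix.unitaryGroup (Finset.Icc (-(N : ℤ)) (N : ℤ)) ℂ) :
    ∀ j k : Finset.Icc (-(N : ℤ)) (N : ℤ),
      ‖(Uh.conjTranspose * W' * Uh) j k‖ ≤ cw * c₂ / ((N : ℝ) + 1) ^ 2 :=
  conjugated_block_bound_general α cw c₂ hcw N W' hW' hc₂a hc₂b Uh hUh
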